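/- arXiv:2212.08394 — 2 statements merged into one kernel-verified Lean document; each statement's English description precedes it below -/
import Mathlib

section
/- Let X, Y ∈ ℝ², let ε, δ ∈ [0,1], and set L := |X − Y| > 0. Let C ∈ B(X, δL) and D ∈ B(Y, δL). Let η : [0,1] → ℝ² be a path with constant speed parametrization joining C and D with arc length l(η) ≤ (1+ε)L, and let γ : [0,1] → ℝ² be the constant speed parametrization of the line segment joining X and Y. Then for every t ∈ [0,1], |η(t) − γ(t)| ≤ √(3ε + 12δ) · L. -/
open Set Filter Metric
open scoped ENNReal Topology

noncomputable section

/-- The Euclidean plane `ℝ²`. -/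
abbrev E2 : Type := EuclideanSpace ℝ (Fin 2)

lemma key_id (u X Y : E2) (t : ℝ) :
    dist u ((1-t)•X + t•Y)^2
      = (1-t)*dist u X^2 + t*dist u Y^2 - t*(1-t)*dist X Y^2 := by
  have h1 : u - ((1-t)•X + t•Y) = (1-t)•(u-X) + t•(u-Y) := by module
  have hXY : X - Y = (u - Y) - (u - X) := by abel
  simp only [dist_eq_norm, h1, hXY]
  generalize u - X = a
  generalize u - Y = b
  rw [norm_add_sq_real, norm_sub_sq_real, norm_smul, norm_smul,
    real_inner_smul_left, real_inner_smul_right, real_inner_comm a b]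
  simp only [mul_pow, sq_abs, Real.norm_eq_abs]
  ring

set_option maxHeartbeats 1600000 in
/-- Let `X, Y ∈ ℝ²`, `ε, δ ∈ [0,1]`, `L := |X - Y| > 0`, `C ∈ B(X, δL)`, `D ∈ B(Y, δL)`.
Let `η : [0,1] → ℝ²` be a constant-speed path of arc length `ℓ ≤ (1+ε)L` joining `C` to
`D` (so the arc length of `η` on `[s,t]` is `(t-s)ℓ`), and let `γ` be the constant-speed
parametrization of the segment `[X,Y]`.  Then `|η(t) - γ(t)| ≤ √(3ε + 12δ) · L` for every
`t ∈ [0,1]`. -/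
theorem constant_speed_paths_close (X Y C D : E2) (ε δ : ℝ)
    (hε : ε ∈ Icc (0 : ℝ) 1) (hδ : δ ∈ Icc (0 : ℝ) 1)
    (L : ℝ) (hL : L = dist X Y) (hLpos : 0 < L)
    (hC : C ∈ closedBall X (δ * L)) (hD : D ∈ closedBall Y (δ * L))
    (η : ℝ → E2) (ℓ : ℝ) (hℓ : 0 ≤ ℓ)
    (hη0 : η 0 = C) (hη1 : η 1 = D)
    (hspeed : ∀ s t : ℝ, 0 ≤ s → s ≤ t → t ≤ 1 →
      eVariationOn η (Icc s t) = ENNReal.ofReal ((t - s) * ℓ))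
    (hlen : ℓ ≤ (1 + ε) * L)
    (γ : ℝ → E2) (hγ : ∀ t : ℝ, γ t = X + t • (Y - X)) :
    ∀ t ∈ Icc (0 : ℝ) 1, dist (η t) (γ t) ≤ Real.sqrt (3 * ε + 12 * δ) * L := by
  intro t ht
  obtain ⟨ht0, ht1⟩ := ht
  obtain ⟨hε0, hε1⟩ := hε
  obtain ⟨hδ0, hδ1⟩ := hδ
  -- distances along the curve
  have hd0 : dist (η t) (η 0) ≤ t * ℓ := by
    have h := eVariationOn.edist_le η (Set.mem_Icc.mpr ⟨ht0, le_refl t⟩)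
      (Set.mem_Icc.mpr ⟨le_refl 0, ht0⟩)
    rw [hspeed 0 t le_rfl ht0 ht1, sub_zero] at h
    exact (edist_le_ofReal (mul_nonneg ht0 hℓ)).mp h
  have hd1 : dist (η t) (η 1) ≤ (1 - t) * ℓ := by
    have h := eVariationOn.edist_le η (Set.mem_Icc.mpr ⟨le_refl t, ht1⟩)
      (Set.mem_Icc.mpr ⟨ht1, le_refl 1⟩)
    rw [hspeed t 1 ht0 ht1 le_rfl] at h
    exact (edist_le_ofReal (mul_nonneg (by linarith) hℓ)).mp h
  rw [hη0] at hd0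
  rw [hη1] at hd1
  -- distances to X and Y
  have hX : dist (η t) X ≤ t * ℓ + δ * L :=
    (dist_triangle (η t) C X).trans (add_le_add hd0 (mem_closedBall.mp hC))
  have hY : dist (η t) Y ≤ (1 - t) * ℓ + δ * L :=
    (dist_triangle (η t) D Y).trans (add_le_add hd1 (mem_closedBall.mp hD))
  -- γ t as a convex combination
  have hγt : γ t = (1 - t) • X + t • Y := by rw [hγ]; module
  have hid := key_id (η t) X Y t
  rw [← hγt] at hid
  -- square bound
  have hsq : dist (η t) (γ t) ^ 2 ≤ (3 * ε + 12 * δ) * L ^ 2 := by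
    rw [hid, ← hL]
    have h1 : (1 - t) * dist (η t) X ^ 2 ≤ (1 - t) * (t * ℓ + δ * L) ^ 2 := by
      apply mul_le_mul_of_nonneg_left _ (by linarith)
      exact pow_le_pow_left₀ dist_nonneg hX 2
    have h2 : t * dist (η t) Y ^ 2 ≤ t * ((1 - t) * ℓ + δ * L) ^ 2 := by
      apply mul_le_mul_of_nonneg_left _ ht0
      exact pow_le_pow_left₀ dist_nonneg hY 2
    have hℓ2 : ℓ ≤ 2 * L := by nlinarith
    have hs0 : 0 ≤ t * (1 - t) := mul_nonneg ht0 (by linarith)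
    have hs4 : t * (1 - t) ≤ 1 / 4 := by nlinarith [sq_nonneg (2 * t - 1)]
    have hA : ℓ ^ 2 - L ^ 2 ≤ 3 * (ε * L ^ 2) := by
      nlinarith [pow_le_pow_left₀ hℓ hlen 2, mul_nonneg hε0 (sq_nonneg L),
        mul_le_mul_of_nonneg_right (mul_le_of_le_one_left hε0 hε1) (sq_nonneg L)]
    have hεn : (0:ℝ) ≤ 3 * (ε * L ^ 2) := by positivity
    have step1 : t * (1 - t) * (ℓ ^ 2 - L ^ 2) ≤ 3 / 4 * (ε * L ^ 2) := by
      calc t * (1 - t) * (ℓ ^ 2 - L ^ 2) ≤ t * (1 - t) * (3 * (ε * L ^ 2)) :=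
            mul_le_mul_of_nonneg_left hA hs0
        _ ≤ 1 / 4 * (3 * (ε * L ^ 2)) := mul_le_mul_of_nonneg_right hs4 hεn
        _ = 3 / 4 * (ε * L ^ 2) := by ring
    have step2 : t * (1 - t) * (ℓ * (δ * L)) ≤ 1 / 2 * (δ * L ^ 2) := by
      calc t * (1 - t) * (ℓ * (δ * L)) ≤ 1 / 4 * (2 * L * (δ * L)) :=
            mul_le_mul hs4
              (mul_le_mul_of_nonneg_right hℓ2 (mul_nonneg hδ0 hLpos.le))
              (mul_nonneg hℓ (mul_nonneg hδ0 hLpos.le)) (by norm_num)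
        _ = 1 / 2 * (δ * L ^ 2) := by ring
    have step3 : δ ^ 2 * L ^ 2 ≤ δ * L ^ 2 := by
      have := mul_le_mul_of_nonneg_right (mul_le_of_le_one_left hδ0 hδ1) (sq_nonneg L)
      calc δ ^ 2 * L ^ 2 = δ * δ * L ^ 2 := by ring
        _ ≤ δ * L ^ 2 := this
    have key : (1 - t) * (t * ℓ + δ * L) ^ 2 + t * ((1 - t) * ℓ + δ * L) ^ 2
        - t * (1 - t) * L ^ 2 ≤ (3 * ε + 12 * δ) * L ^ 2 := by
      have expand : (1 - t) * (t * ℓ + δ * L) ^ 2 + t * ((1 - t) * ℓ + δ * L) ^ 2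
          - t * (1 - t) * L ^ 2
          = t * (1 - t) * (ℓ ^ 2 - L ^ 2) + 4 * (t * (1 - t) * (ℓ * (δ * L)))
            + δ ^ 2 * L ^ 2 := by ring
      have hεn2 : (0:ℝ) ≤ ε * L ^ 2 := by positivity
      have hδn2 : (0:ℝ) ≤ δ * L ^ 2 := by positivity
      rw [expand]
      linarith [step1, step2, step3]
    linarith [h1, h2, key]
  calc dist (η t) (γ t) = Real.sqrt (dist (η t) (γ t) ^ 2) := (Real.sqrt_sq dist_nonneg).symm
    _ ≤ Real.sqrt ((3 * ε + 12 * δ) * L ^ 2) := Real.sqrt_le_sqrt hsq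
    _ = Real.sqrt (3 * ε + 12 * δ) * L := by
        rw [Real.sqrt_mul (by linarith), Real.sqrt_sq hLpos.le]
end
end

section
/- Let R ⊂ ℝ² be a rectangle, let a, b ∈ ∂R, let ξ > 0, and let S be the generalized segment from a to b in R with parameter ξ. Then for every closed connected subset S̃ ⊂ S one has H¹(S̃) ≤ (1+ξ) · diam(S̃). -/
open MeasureTheory Set Filter Metric
open scoped ENNReal Topology RealInnerProductSpace NNReal

noncomputable section

/-- First coordinate vector. -/
def e₀ : E2 := EuclideanSpace.single 0 1
/-- Second coordinate vector. -/
def e₁ : E2 := EuclideanSpace.single 1 1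

/-- The (closed) axis-parallel rectangle `[x₁,x₂] × [y₁,y₂]`. -/
def rect (x₁ x₂ y₁ y₂ : ℝ) : Set E2 := {p : E2 | p 0 ∈ Icc x₁ x₂ ∧ p 1 ∈ Icc y₁ y₂}

/-- The four sides of the rectangle `[x₁,x₂] × [y₁,y₂]`. -/
def sideLeft (x₁ x₂ y₁ y₂ : ℝ) : Set E2 := {p : E2 | p 0 = x₁ ∧ p 1 ∈ Icc y₁ y₂}
def sideRight (x₁ x₂ y₁ y₂ : ℝ) : Set E2 := {p : E2 | p 0 = x₂ ∧ p 1 ∈ Icc y₁ y₂}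
def sideBottom (x₁ x₂ y₁ y₂ : ℝ) : Set E2 := {p : E2 | p 1 = y₁ ∧ p 0 ∈ Icc x₁ x₂}
def sideTop (x₁ x₂ y₁ y₂ : ℝ) : Set E2 := {p : E2 | p 1 = y₂ ∧ p 0 ∈ Icc x₁ x₂}

/-- The boundary of the rectangle, as the union of its four sides. -/
def rectBoundary (x₁ x₂ y₁ y₂ : ℝ) : Set E2 :=
  sideLeft x₁ x₂ y₁ y₂ ∪ sideRight x₁ x₂ y₁ y₂ ∪ sideBottom x₁ x₂ y₁ y₂ ∪ sideTop x₁ x₂ y₁ y₂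

/-- `a` and `b` lie on a common side of the rectangle, with inward unit normal `n`. -/
def OnCommonSide (x₁ x₂ y₁ y₂ : ℝ) (a b n : E2) : Prop :=
  (a ∈ sideLeft x₁ x₂ y₁ y₂ ∧ b ∈ sideLeft x₁ x₂ y₁ y₂ ∧ n = e₀) ∨
  (a ∈ sideRight x₁ x₂ y₁ y₂ ∧ b ∈ sideRight x₁ x₂ y₁ y₂ ∧ n = -e₀) ∨
  (a ∈ sideBottom x₁ x₂ y₁ y₂ ∧ b ∈ sideBottom x₁ x₂ y₁ y₂ ∧ n = e₁) ∨
  (a ∈ sideTop x₁ x₂ y₁ y₂ ∧ b ∈ sideTop x₁ x₂ y₁ y₂ ∧ n = -e₁)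

/-- `S` is the generalized segment from `a` to `b` in the rectangle `[x₁,x₂] × [y₁,y₂]`
with parameter `ξ`:  the ordinary segment `[ab]` if `a`, `b` do not lie on a common side;
otherwise the union `[aM] ∪ [Mb]`, where `M` lies inside `R` at distance `ξ|a-b|/2` from
the side containing `a` and `b` and projects onto the midpoint of `[ab]`. -/
def IsGenSegment (x₁ x₂ y₁ y₂ ξ : ℝ) (a b : E2) (S : Set E2) : Prop :=
  ((¬ ∃ n, OnCommonSide x₁ x₂ y₁ y₂ a b n) ∧ S = segment ℝ a b) ∨
  (∃ n : E2, OnCommonSide x₁ x₂ y₁ y₂ a b n ∧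
    S = segment ℝ a (midpoint ℝ a b + (ξ * dist a b / 2) • n) ∪
        segment ℝ (midpoint ℝ a b + (ξ * dist a b / 2) • n) b)

/-! On one segment, `H¹` is Lebesgue measure carried over by an isometry of `ℝ`, hence bounded by
the diameter. In the bent case `[aM] ∪ [Mb]` the apex `M` lies on the perpendicular bisector of
`[ab]`, so the triangle `aMb` is isosceles, and `2|a - M| ≤ (1 + ξ)|a - b|` by the triangle
inequality through the midpoint. Split `S̃` along the two legs: each piece has diameter at most the
distance from `M` of its points, and for `z ∈ [Ma]`, `q ∈ [Mb]` one has
`(|z - M| + |q - M|)|a - b| ≤ 2|a - M||z - q|`, with equality when `|z - M| = |q - M|`. -/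

lemma Isometry.hausdorffMeasure_one_image_le_ediam {X : Type*} [EMetricSpace X]
    [MeasurableSpace X] [BorelSpace X] {f : ℝ → X} (hf : Isometry f) (s : Set ℝ) :
    μH[1] (f '' s) ≤ ediam (f '' s) := by
  rw [hf.hausdorffMeasure_image (Or.inl zero_le_one), hf.ediam_image, hausdorffMeasure_real]
  exact Real.volume_le_diam s

section Segment

variable {E : Type*} [NormedAddCommGroup E] [NormedSpace ℝ E]

lemma isBounded_segment (x y : E) : Bornology.IsBounded (segment ℝ x y) := by
  rw [segment_eq_image']
  exact (isCompact_Icc.image (by fun_prop)).isBounded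

lemma dist_add_smul_add_smul (x v : E) (s t : ℝ) :
    dist (x + s • v) (x + t • v) = |s - t| * ‖v‖ := by
  rw [dist_add_left, dist_eq_norm, ← sub_smul, norm_smul, Real.norm_eq_abs]

lemma dist_le_max_dist_of_mem_segment {M a z z' : E} (hz : z ∈ segment ℝ M a)
    (hz' : z' ∈ segment ℝ M a) : dist z z' ≤ max (dist z M) (dist z' M) := by
  rw [segment_eq_image'] at hz hz'
  obtain ⟨s, ⟨hs, -⟩, rfl⟩ := hz
  obtain ⟨s', ⟨hs', -⟩, rfl⟩ := hz'
  simp only [dist_add_smul_add_smul, dist_self_add_left, norm_smul, Real.norm_eq_abs,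
    abs_of_nonneg hs, abs_of_nonneg hs', ← max_mul_of_nonneg _ _ (norm_nonneg (a - M))]
  gcongr
  exact abs_sub_le_iff.2 ⟨by linarith [le_max_left s s'], by linarith [le_max_right s s']⟩

lemma ediam_le_biSup_edist_of_subset_segment {M a : E} {T : Set E}
    (hT : T ⊆ segment ℝ M a) : ediam T ≤ ⨆ z ∈ T, edist z M := by
  refine ediam_le_iff.2 fun z hz z' hz' => ?_
  calc edist z z' ≤ max (edist z M) (edist z' M) := by
        simpa only [edist_dist, ENNReal.ofReal_max] using
          ENNReal.ofReal_le_ofReal (dist_le_max_dist_of_mem_segment (hT hz) (hT hz'))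
    _ ≤ ⨆ z ∈ T, edist z M := max_le (le_biSup (edist · M) hz) (le_biSup (edist · M) hz')

variable [MeasurableSpace E] [BorelSpace E]

lemma hausdorffMeasure_one_le_ediam_of_subset_segment {x y : E} {T : Set E}
    (hT : T ⊆ segment ℝ x y) : μH[1] T ≤ ediam T := by
  rcases eq_or_ne x y with rfl | hxy
  · calc μH[1] T ≤ μH[1] (segment ℝ x x) := measure_mono hT
      _ = 0 := by rw [hausdorffMeasure_segment, edist_self]
      _ ≤ ediam T := zero_le
  have hyx : ‖y - x‖ ≠ 0 := norm_ne_zero_iff.2 (sub_ne_zero.2 hxy.symm)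
  set v : E := ‖y - x‖⁻¹ • (y - x)
  have hv : ‖v‖ = 1 := norm_smul_inv_norm (sub_ne_zero.2 hxy.symm)
  have hf : Isometry fun t : ℝ => x + t • v :=
    Isometry.of_dist_eq fun s t => by rw [dist_add_smul_add_smul, hv, mul_one, Real.dist_eq]
  have hTf : T ⊆ range fun t : ℝ => x + t • v := by
    rw [segment_eq_image'] at hT
    rintro _ hz
    obtain ⟨θ, -, rfl⟩ := hT hz
    exact ⟨θ * ‖y - x‖, by simp [v, smul_smul, hyx]⟩
  rw [← image_preimage_eq_of_subset hTf]
  exact hf.hausdorffMeasure_one_image_le_ediam _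

end Segment

section InnerProduct

variable {F : Type*} [NormedAddCommGroup F] [InnerProductSpace ℝ F]

-- The square of the right side minus that of the left is `2 (s - t)² (‖u‖² + ⟪u, v⟫) ≥ 0`.
lemma add_mul_norm_sub_le_two_mul_norm_smul_sub_smul {u v : F} (h : ‖u‖ = ‖v‖) (s t : ℝ) :
    (s + t) * ‖u - v‖ ≤ 2 * ‖s • u - t • v‖ := by
  have hinner : -(‖u‖ * ‖u‖) ≤ ⟪u, v⟫ := neg_le_of_abs_le (h ▸ abs_real_inner_le_norm u v)
  have hsq : ((s + t) * ‖u - v‖) ^ 2 ≤ (2 * ‖s • u - t • v‖) ^ 2 := by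
    rw [mul_pow, mul_pow, norm_sub_sq_real, norm_sub_sq_real, norm_smul, norm_smul,
      real_inner_smul_left, real_inner_smul_right, Real.norm_eq_abs, Real.norm_eq_abs, mul_pow,
      mul_pow, sq_abs, sq_abs, ← h]
    nlinarith [mul_nonneg (sq_nonneg (s - t)) (neg_le_iff_add_nonneg.1 hinner)]
  exact (abs_le_of_sq_le_sq' hsq (by positivity)).2

lemma dist_add_dist_mul_dist_le_of_mem_segment {M a b z q : F} (h : dist a M = dist b M)
    (hz : z ∈ segment ℝ M a) (hq : q ∈ segment ℝ M b) :
    (dist z M + dist q M) * dist a b ≤ 2 * dist a M * dist z q := by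
  rw [segment_eq_image'] at hz hq
  obtain ⟨s, ⟨hs, -⟩, rfl⟩ := hz
  obtain ⟨t, ⟨ht, -⟩, rfl⟩ := hq
  have huv : ‖a - M‖ = ‖b - M‖ := by rwa [← dist_eq_norm, ← dist_eq_norm]
  have key := add_mul_norm_sub_le_two_mul_norm_smul_sub_smul huv s t
  rw [dist_self_add_left, dist_self_add_left, dist_add_left, dist_eq_norm, dist_eq_norm,
    dist_eq_norm, norm_smul, norm_smul, Real.norm_eq_abs, Real.norm_eq_abs, abs_of_nonneg hs,
    abs_of_nonneg ht, ← huv, show a - b = (a - M) - (b - M) by abel]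
  nlinarith [norm_nonneg (a - M)]

lemma dist_add_dist_le_mul_dist_of_mem_segment {M a b z q : F} (hab : a ≠ b)
    (h : dist a M = dist b M) {c : ℝ} (hc : 2 * dist a M ≤ c * dist a b)
    (hz : z ∈ segment ℝ M a) (hq : q ∈ segment ℝ M b) :
    dist z M + dist q M ≤ c * dist z q := by
  refine le_of_mul_le_mul_right ?_ (dist_pos.2 hab)
  calc (dist z M + dist q M) * dist a b ≤ 2 * dist a M * dist z q :=
        dist_add_dist_mul_dist_le_of_mem_segment h hz hq
    _ ≤ c * dist a b * dist z q := by gcongr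
    _ = c * dist z q * dist a b := by ring

lemma dist_left_midpoint_add_smul_eq_dist_right {a b n : F} (h : ⟪a - b, n⟫ = 0) (r : ℝ) :
    dist a (midpoint ℝ a b + r • n) = dist b (midpoint ℝ a b + r • n) := by
  rw [← AffineSubspace.mem_perpBisector_iff_dist_eq',
    AffineSubspace.mem_perpBisector_iff_inner_eq_zero, vsub_eq_sub, add_sub_cancel_left,
    vsub_eq_sub, real_inner_smul_left, ← neg_sub, inner_neg_right, real_inner_comm, h, neg_zero,
    mul_zero]

variable [MeasurableSpace F] [BorelSpace F]

lemma hausdorffMeasure_one_le_of_subset_segment_union_segment {M a b : F} (hab : a ≠ b)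
    (h : dist a M = dist b M) {c : ℝ} (hc : 2 * dist a M ≤ c * dist a b) {T : Set F}
    (hT : T ⊆ segment ℝ M a ∪ segment ℝ M b) : μH[1] T ≤ ENNReal.ofReal c * ediam T := by
  have hc1 : 1 ≤ ENNReal.ofReal c := by
    rw [← ENNReal.ofReal_one]
    refine ENNReal.ofReal_le_ofReal (le_of_mul_le_mul_right ?_ (dist_pos.2 hab))
    linarith [dist_triangle_right a b M]
  by_cases hTa : T ⊆ segment ℝ M a
  · exact (hausdorffMeasure_one_le_ediam_of_subset_segment hTa).trans (le_mul_of_one_le_left' hc1)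
  by_cases hTb : T ⊆ segment ℝ M b
  · exact (hausdorffMeasure_one_le_ediam_of_subset_segment hTb).trans (le_mul_of_one_le_left' hc1)
  have hTa' : (T ∩ segment ℝ M a).Nonempty :=
    let ⟨z, hzT, hzb⟩ := not_subset.1 hTb; ⟨z, hzT, (hT hzT).resolve_right hzb⟩
  have hTb' : (T ∩ segment ℝ M b).Nonempty :=
    let ⟨q, hqT, hqa⟩ := not_subset.1 hTa; ⟨q, hqT, (hT hqT).resolve_left hqa⟩
  have hsplit : T ⊆ T ∩ segment ℝ M a ∪ T ∩ segment ℝ M b := fun w hw =>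
    (hT hw).imp (⟨hw, ·⟩) (⟨hw, ·⟩)
  have hfar : ∀ z ∈ T ∩ segment ℝ M a, ∀ q ∈ T ∩ segment ℝ M b,
      edist z M + edist q M ≤ ENNReal.ofReal c * ediam T := by
    rintro z ⟨hzT, hz⟩ q ⟨hqT, hq⟩
    calc edist z M + edist q M = ENNReal.ofReal (dist z M + dist q M) := by
          rw [edist_dist, edist_dist, ENNReal.ofReal_add dist_nonneg dist_nonneg]
      _ ≤ ENNReal.ofReal (c * dist z q) :=
          ENNReal.ofReal_le_ofReal (dist_add_dist_le_mul_dist_of_mem_segment hab h hc hz hq)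
      _ ≤ ENNReal.ofReal c * ediam T := by
          rw [ENNReal.ofReal_mul' dist_nonneg, ← edist_dist]
          exact mul_le_mul_right (edist_le_ediam_of_mem hzT hqT) _
  calc μH[1] T ≤ μH[1] (T ∩ segment ℝ M a) + μH[1] (T ∩ segment ℝ M b) :=
        (measure_mono hsplit).trans (measure_union_le _ _)
    _ ≤ ediam (T ∩ segment ℝ M a) + ediam (T ∩ segment ℝ M b) :=
        add_le_add (hausdorffMeasure_one_le_ediam_of_subset_segment inter_subset_right)
          (hausdorffMeasure_one_le_ediam_of_subset_segment inter_subset_right)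
    _ ≤ (⨆ z ∈ T ∩ segment ℝ M a, edist z M) + ⨆ q ∈ T ∩ segment ℝ M b, edist q M :=
        add_le_add (ediam_le_biSup_edist_of_subset_segment inter_subset_right)
          (ediam_le_biSup_edist_of_subset_segment inter_subset_right)
    _ ≤ ENNReal.ofReal c * ediam T := ENNReal.biSup_add_biSup_le hTa' hTb' hfar

end InnerProduct

lemma OnCommonSide.norm_eq_one_and_inner_eq_zero {x₁ x₂ y₁ y₂ : ℝ} {a b n : E2}
    (hn : OnCommonSide x₁ x₂ y₁ y₂ a b n) : ‖n‖ = 1 ∧ ⟪a - b, n⟫ = 0 := by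
  rcases hn with ⟨⟨ha, -⟩, ⟨hb, -⟩, rfl⟩ | ⟨⟨ha, -⟩, ⟨hb, -⟩, rfl⟩ |
    ⟨⟨ha, -⟩, ⟨hb, -⟩, rfl⟩ | ⟨⟨ha, -⟩, ⟨hb, -⟩, rfl⟩ <;>
  simp [e₀, e₁, inner_neg_right, EuclideanSpace.inner_single_right, ha, hb]

lemma IsGenSegment.isBounded {x₁ x₂ y₁ y₂ ξ : ℝ} {a b : E2} {S : Set E2}
    (hS : IsGenSegment x₁ x₂ y₁ y₂ ξ a b S) : Bornology.IsBounded S := by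
  rcases hS with ⟨-, rfl⟩ | ⟨n, -, rfl⟩
  · exact isBounded_segment a b
  · exact (isBounded_segment _ _).union (isBounded_segment _ _)

theorem genSegment_length_le_general (x₁ x₂ y₁ y₂ : ℝ) (ξ : ℝ) (hξ : 0 < ξ) (a b : E2) (hab : a ≠ b)
    (S : Set E2) (hS : IsGenSegment x₁ x₂ y₁ y₂ ξ a b S) :
    ∀ T : Set E2, T ⊆ S → IsClosed T → IsPreconnected T →
      μH[1] T ≤ ENNReal.ofReal ((1 + ξ) * Metric.diam T) := by
  intro T hTS _ _
  rw [ENNReal.ofReal_mul (by linarith), Metric.diam,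
    ENNReal.ofReal_toReal (hS.isBounded.subset hTS).ediam_ne_top]
  rcases hS with ⟨-, rfl⟩ | ⟨n, hn, rfl⟩
  · exact (hausdorffMeasure_one_le_ediam_of_subset_segment hTS).trans
      (le_mul_of_one_le_left' (by simpa using hξ.le))
  obtain ⟨hn1, hnab⟩ := hn.norm_eq_one_and_inner_eq_zero
  have hM : 2 * dist a (midpoint ℝ a b + (ξ * dist a b / 2) • n) ≤ (1 + ξ) * dist a b := by
    have := dist_triangle a (midpoint ℝ a b) (midpoint ℝ a b + (ξ * dist a b / 2) • n)
    rw [dist_left_midpoint, dist_self_add_right, norm_smul, hn1, mul_one] at this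
    norm_num [abs_of_pos hξ] at this
    linarith
  refine hausdorffMeasure_one_le_of_subset_segment_union_segment hab
    (dist_left_midpoint_add_smul_eq_dist_right hnab _) hM ?_
  rwa [segment_symm ℝ a] at hTS

/-- Let `R ⊂ ℝ²` be a rectangle, `a ≠ b ∈ ∂R`, `ξ > 0`, and let `S` be the generalized
segment from `a` to `b` in `R` with parameter `ξ`.  Then every closed connected subset
`S̃ ⊆ S` satisfies `H¹(S̃) ≤ (1+ξ) · diam S̃`. -/
theorem genSegment_length_le (x₁ x₂ y₁ y₂ : ℝ) (hx : x₁ < x₂) (hy : y₁ < y₂)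
    (ξ : ℝ) (hξ : 0 < ξ) (a b : E2)
    (ha : a ∈ rectBoundary x₁ x₂ y₁ y₂) (hb : b ∈ rectBoundary x₁ x₂ y₁ y₂) (hab : a ≠ b)
    (S : Set E2) (hS : IsGenSegment x₁ x₂ y₁ y₂ ξ a b S) :
    ∀ T : Set E2, T ⊆ S → IsClosed T → IsPreconnected T →
      μH[1] T ≤ ENNReal.ofReal ((1 + ξ) * Metric.diam T) :=
  genSegment_length_le_general x₁ x₂ y₁ y₂ ξ hξ a b hab S hS
end
end
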